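/- Bisimulation implies logical equivalence: if the pointed genealogical Kripke models (M,s) and (N,t) are bisimilar, then for every FOMC-sentence φ, M,s ⊨ φ if and only if N,t ⊨ φ. -/
import Mathlib


set_option linter.unusedVariables false

/-! Genealogical Kripke models and first-order modal ξ-calculus (FOMC). -/

/-- A genealogical Kripke model over a fixed type `W` of possible worlds,
propositional letters `P` and constant symbols `C`.  The children models are
given by an index type `ι` with a family `child : ι → GKM W P C`. -/
inductive GKM (W P C : Type) : Type 1 where
  | mk (S : Set W) (Sne : S.Nonempty) (R : W → W → Prop) (V : P → Set W)
      (ι : Type) (child : ι → GKM W P C)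
      (I : W → C → Option ι) (T : W → ι → W) : GKM W P C

namespace GKM

variable {W P C : Type}

def S : GKM W P C → Set W
  | .mk S _ _ _ _ _ _ _ => S

def R : GKM W P C → W → W → Prop
  | .mk _ _ R _ _ _ _ _ => R

def V : GKM W P C → P → Set W
  | .mk _ _ _ V _ _ _ _ => V

/-- The index type of the set of children models. -/
def Idx : GKM W P C → Type
  | .mk _ _ _ _ ι _ _ _ => ι

def child : (M : GKM W P C) → M.Idx → GKM W P C
  | .mk _ _ _ _ _ c _ _ => c

def I : (M : GKM W P C) → W → C → Option M.Idx
  | .mk _ _ _ _ _ _ I _ => I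

def T : (M : GKM W P C) → W → M.Idx → W
  | .mk _ _ _ _ _ _ _ T => T

/-- `IsChild M' M` : `M'` is a member of the set `N_M` of children models of `M`. -/
def IsChild (M' M : GKM W P C) : Prop := ∃ a, M.child a = M'

theorem acc_isChild (M : GKM W P C) : Acc IsChild M := by
  induction M with
  | mk S ne R V ι c I T ih =>
    refine Acc.intro _ fun M' h => ?_
    obtain ⟨a, ha⟩ := h
    subst ha
    exact ih a

theorem isChild_wf : WellFounded (@IsChild W P C) := ⟨acc_isChild⟩

instance : WellFoundedRelation (GKM W P C) :=
  ⟨Relation.TransGen IsChild, isChild_wf.transGen⟩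

/-- Hereditary well-formedness: `R ⊆ S × S` and `T(s,N') ∈ S_{N'}`, recursively. -/
def WF (M : GKM W P C) : Prop :=
  (∀ u u', M.R u u' → u ∈ M.S ∧ u' ∈ M.S) ∧
  (∀ s ∈ M.S, ∀ a : M.Idx, M.T s a ∈ (M.child a).S) ∧
  (∀ a : M.Idx, WF (M.child a))
termination_by M
decreasing_by exact Relation.TransGen.single ⟨_, rfl⟩

/-- Finitely many children, hereditarily. -/
def ChildFin (M : GKM W P C) : Prop :=
  Finite M.Idx ∧ ∀ a : M.Idx, ChildFin (M.child a)
termination_by M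
decreasing_by exact Relation.TransGen.single ⟨_, rfl⟩

/-- Image-finite genealogical Kripke model. -/
def ImageFinite (M : GKM W P C) : Prop :=
  (∀ s ∈ M.S, {t | M.R s t}.Finite) ∧ Finite M.Idx ∧
    ∀ a : M.Idx, ImageFinite (M.child a)
termination_by M
decreasing_by exact Relation.TransGen.single ⟨_, rfl⟩

end GKM

/-- Formulas of first-order modal ξ-calculus.  Model variables and formula
variables are both encoded as natural numbers (in separate namespaces).
`qmv φ x` is `¿φ?x`, `qmc φ c` is `¿φ?c`, `all x φ` is `∀x.φ` and
`xi X φ` is `ξX.φ`. -/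
inductive Fm (P C : Type) : Type where
  | fvar : ℕ → Fm P C
  | top : Fm P C
  | prop : P → Fm P C
  | qmv : Fm P C → ℕ → Fm P C
  | qmc : Fm P C → C → Fm P C
  | neg : Fm P C → Fm P C
  | and : Fm P C → Fm P C → Fm P C
  | box : Fm P C → Fm P C
  | all : ℕ → Fm P C → Fm P C
  | xi : ℕ → Fm P C → Fm P C

namespace Fm

variable {P C : Type}

/-- `∃x.φ := ¬∀x.¬φ`. -/
def exi (x : ℕ) (φ : Fm P C) : Fm P C := .neg (.all x (.neg φ))

/-- `◇φ := ¬□¬φ`. -/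
def dia (φ : Fm P C) : Fm P C := .neg (.box (.neg φ))

/-- Free model variables. -/
def fmv : Fm P C → Finset ℕ
  | .fvar _ => ∅
  | .top => ∅
  | .prop _ => ∅
  | .qmv φ x => fmv φ ∪ {x}
  | .qmc φ _ => fmv φ
  | .neg φ => fmv φ
  | .and φ ψ => fmv φ ∪ fmv ψ
  | .box φ => fmv φ
  | .all x φ => fmv φ \ {x}
  | .xi _ φ => fmv φ

/-- Formula variables with a free occurrence *outside* every `¿ ?` pair.
Such occurrences are never bound by `ξ`. -/
def ffvOut : Fm P C → Finset ℕ
  | .fvar X => {X}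
  | .top => ∅
  | .prop _ => ∅
  | .qmv _ _ => ∅
  | .qmc _ _ => ∅
  | .neg φ => ffvOut φ
  | .and φ ψ => ffvOut φ ∪ ffvOut ψ
  | .box φ => ffvOut φ
  | .all _ φ => ffvOut φ
  | .xi _ φ => ffvOut φ

/-- Formula variables with a free occurrence *inside* some `¿ ?` pair
(these are the occurrences a surrounding `ξX.` can bind). -/
def ffvIn : Fm P C → Finset ℕ
  | .fvar _ => ∅
  | .top => ∅
  | .prop _ => ∅
  | .qmv φ _ => ffvOut φ ∪ ffvIn φ
  | .qmc φ _ => ffvOut φ ∪ ffvIn φ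
  | .neg φ => ffvIn φ
  | .and φ ψ => ffvIn φ ∪ ffvIn ψ
  | .box φ => ffvIn φ
  | .all _ φ => ffvIn φ
  | .xi X φ => ffvIn φ \ {X}

/-- Free formula variables. -/
def ffv (φ : Fm P C) : Finset ℕ := ffvOut φ ∪ ffvIn φ

/-- The extra subformula conditions of Definition 2.3. -/
def Good : Fm P C → Prop
  | .fvar _ => True
  | .top => True
  | .prop _ => True
  | .qmv φ _ => fmv φ = ∅ ∧ Good φ
  | .qmc φ _ => fmv φ = ∅ ∧ Good φ
  | .neg φ => Good φ
  | .and φ ψ => Good φ ∧ Good ψ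
  | .box φ => Good φ
  | .all _ φ => Good φ
  | .xi X φ => fmv (Fm.xi X φ) = ∅ ∧ ffv (Fm.xi X φ) = ∅ ∧ Good φ

/-- FOMC-sentences (Definition 2.3). -/
def IsSentence (φ : Fm P C) : Prop := fmv φ = ∅ ∧ ffv φ = ∅ ∧ Good φ

end Fm

namespace GKM

variable {W P C : Type}

mutual

/-- Semantics (Definition 2.11).  `i` interprets model variables as children
models of the current model (via their indices), and `j` interprets formula
variables semantically, as maps assigning to each genealogical Kripke model a
set of worlds. -/
def eval : (φ : Fm P C) → (M : GKM W P C) → (ℕ → Option M.Idx) →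
    (ℕ → Option (GKM W P C → Set W)) → Set W
  | .fvar X, M, _, j => M.S ∩ ((j X).elim ∅ fun F => F M)
  | .top, M, _, _ => M.S
  | .prop p, M, _, _ => M.S ∩ M.V p
  | .qmv φ x, M, i, j =>
      {s | s ∈ M.S ∧ ∃ a, i x = some a ∧
        M.T s a ∈ eval φ (M.child a) (fun _ => none) j}
  | .qmc φ c, M, _, j =>
      {s | s ∈ M.S ∧ ∃ a, M.I s c = some a ∧
        M.T s a ∈ eval φ (M.child a) (fun _ => none) j}
  | .neg φ, M, i, j => M.S \ eval φ M i j
  | .and φ ψ, M, i, j => eval φ M i j ∩ eval ψ M i j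
  | .box φ, M, i, j => {s | s ∈ M.S ∧ ∀ t, M.R s t → t ∈ eval φ M i j}
  | .all x φ, M, i, j =>
      {s | s ∈ M.S ∧ ∀ a : M.Idx, s ∈ eval φ M (Function.update i x (some a)) j}
  | .xi X φ, M, i, j => eval φ M i (Function.update j X (some (fun N => xiClosure φ X j N)))
  termination_by φ M i j => (sizeOf φ, 1)

/-- The semantic value bound to `X` by `ξX.φ` under environment `j`: the
(depth-guarded) fixed point `F` with `F N = ⟦φ⟧^N_{∅, j[X:=F]}`. -/
def xiClosure (φ : Fm P C) (X : ℕ) (j : ℕ → Option (GKM W P C → Set W))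
    (N₀ : GKM W P C) : Set W :=
  WellFounded.fix (isChild_wf.transGen)
    (fun N rec =>
      eval φ N (fun _ => none) (Function.update j X (some fun N' =>
        @dite (Set W) (Relation.TransGen IsChild N' N) (Classical.dec _)
          (fun h => rec N' h) (fun _ => ∅))))
    N₀
  termination_by (sizeOf φ, 2)

end

/-- `M,s ⊨ φ` : truth of the FOMC-sentence `φ` at the pointed model `M,s`. -/
def Sat (M : GKM W P C) (s : W) (φ : Fm P C) : Prop :=
  s ∈ eval φ M (fun _ => none) (fun _ => none)

/-- Environments arising from binding sentences `ξX.ψ` (used for the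
intermediate stages of evaluating an FOMC-sentence). -/
inductive GoodEnv : (ℕ → Option (GKM W P C → Set W)) → Prop where
  | nil : GoodEnv (fun _ => none)
  | cons {j : ℕ → Option (GKM W P C → Set W)} {X : ℕ} {ψ : Fm P C} :
      GoodEnv j → (Fm.xi X ψ).IsSentence →
      GoodEnv (Function.update j X (some (xiClosure ψ X j)))

/-- Bisimilarity of pointed genealogical Kripke models (Definition 4.2). -/
def Bisim (M : GKM W P C) (s : W) (N : GKM W P C) (t : W) : Prop :=
  ∃ (Z : W → W → Prop) (f : W → W → M.Idx → N.Idx → Prop),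
    Z s t ∧
    (∀ u v, Z u v → u ∈ M.S ∧ v ∈ N.S) ∧
    (∀ u v, Z u v → ∀ p : P, u ∈ M.V p ↔ v ∈ N.V p) ∧
    (∀ u v, Z u v → ∀ a : M.Idx, ∃ b : N.Idx, f u v a b) ∧
    (∀ u v, Z u v → ∀ b : N.Idx, ∃ a : M.Idx, f u v a b) ∧
    (∀ u v, Z u v → ∀ a b, f u v a b →
      Bisim (M.child a) (M.T u a) (N.child b) (N.T v b)) ∧
    (∀ u v, Z u v → ∀ c : C,
      (M.I u c = none ∧ N.I v c = none) ∨
      (∃ a b, M.I u c = some a ∧ N.I v c = some b ∧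
        Bisim (M.child a) (M.T u a) (N.child b) (N.T v b))) ∧
    (∀ u v, Z u v → ∀ u', M.R u u' →
      ∃ v', N.R v v' ∧ Z u' v' ∧ ∀ a b, f u v a b → f u' v' a b) ∧
    (∀ u v, Z u v → ∀ v', N.R v v' →
      ∃ u', M.R u u' ∧ Z u' v' ∧ ∀ a b, f u v a b → f u' v' a b)
termination_by M
decreasing_by all_goals exact Relation.TransGen.single ⟨_, rfl⟩

/-- The conditions of Definition 4.2 for a specific pair `(Z, f)` of witnesses. -/
def IsBisim (M N : GKM W P C) (Z : W → W → Prop)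
    (f : W → W → M.Idx → N.Idx → Prop) : Prop :=
  (∀ u v, Z u v → u ∈ M.S ∧ v ∈ N.S) ∧
  (∀ u v, Z u v → ∀ p : P, u ∈ M.V p ↔ v ∈ N.V p) ∧
  (∀ u v, Z u v → ∀ a : M.Idx, ∃ b : N.Idx, f u v a b) ∧
  (∀ u v, Z u v → ∀ b : N.Idx, ∃ a : M.Idx, f u v a b) ∧
  (∀ u v, Z u v → ∀ a b, f u v a b →
    Bisim (M.child a) (M.T u a) (N.child b) (N.T v b)) ∧
  (∀ u v, Z u v → ∀ c : C,
    (M.I u c = none ∧ N.I v c = none) ∨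
    (∃ a b, M.I u c = some a ∧ N.I v c = some b ∧
      Bisim (M.child a) (M.T u a) (N.child b) (N.T v b))) ∧
  (∀ u v, Z u v → ∀ u', M.R u u' →
    ∃ v', N.R v v' ∧ Z u' v' ∧ ∀ a b, f u v a b → f u' v' a b) ∧
  (∀ u v, Z u v → ∀ v', N.R v v' →
    ∃ u', M.R u u' ∧ Z u' v' ∧ ∀ a b, f u v a b → f u' v' a b)

/-- `n`-fold relational composition. -/
def relPow (r : W → W → Prop) : ℕ → W → W → Prop
  | 0 => fun a b => a = b
  | n + 1 => fun a c => ∃ b, relPow r n a b ∧ r b c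

/-- Standard Kripke semantics on the frame `(S_M, R_M)` with valuation `V_M`
(meaningful for pure propositional modal formulas). -/
def kEval (M : GKM W P C) : Fm P C → Set W
  | .top => M.S
  | .prop p => M.S ∩ M.V p
  | .neg φ => M.S \ kEval M φ
  | .and φ ψ => kEval M φ ∩ kEval M ψ
  | .box φ => {s | s ∈ M.S ∧ ∀ t, M.R s t → t ∈ kEval M φ}
  | _ => ∅

end GKM

/-- Pure propositional modal formulas. -/
def Fm.Pure {P C : Type} : Fm P C → Prop
  | .top => True
  | .prop _ => True
  | .neg φ => Pure φ
  | .and φ ψ => Pure φ ∧ Pure ψ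
  | .box φ => Pure φ
  | _ => False

namespace GKM
variable {W P C : Type}

theorem gkm_ind {motive : GKM W P C → Prop}
    (h : ∀ M, (∀ M', Relation.TransGen IsChild M' M → motive M') → motive M) :
    ∀ M, motive M := fun M => (isChild_wf.transGen).induction M h

theorem bisim_iff (M N : GKM W P C) (s t : W) :
    Bisim M s N t ↔ ∃ Z f, Z s t ∧ IsBisim M N Z f := by
  rw [Bisim]; unfold IsBisim; tauto

theorem xiClosure_unfold (φ : Fm P C) (X : ℕ) (j) (N₀ : GKM W P C) :
    xiClosure φ X j N₀ = eval φ N₀ (fun _ => none)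
      (Function.update j X (some fun N' =>
        @dite (Set W) (Relation.TransGen IsChild N' N₀) (Classical.dec _)
          (fun _ => xiClosure φ X j N') (fun _ => ∅))) := by
  conv_lhs => rw [xiClosure, WellFounded.fix_eq]
  simp only [xiClosure]

/-- value of an optional semantic assignment at a model -/
def mval (o : Option (GKM W P C → Set W)) (M : GKM W P C) : Set W :=
  o.elim ∅ fun F => F M

theorem of_ffv_xi {ψ : Fm P C} {X : ℕ} (h : (Fm.xi X ψ).ffv = ∅) :
    ψ.ffvOut = ∅ ∧ ∀ Y ∈ ψ.ffvIn, Y = X := by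
  have h' := Finset.eq_empty_iff_forall_notMem.mp h
  simp only [Fm.ffv, Fm.ffvOut, Fm.ffvIn, Finset.mem_union, Finset.mem_sdiff,
    Finset.mem_singleton, not_or, not_and, not_not] at h'
  refine ⟨Finset.eq_empty_iff_forall_notMem.mpr fun Y hY => (h' Y).1 hY, fun Y hY => ?_⟩
  by_contra hne
  exact hne ((h' Y).2 hY)

theorem eval_ext : ∀ (φ : Fm P C), φ.Good → ∀ (M : GKM W P C) (i) (j j'),
    (∀ X ∈ φ.ffvOut, mval (j X) M = mval (j' X) M) →
    (∀ X ∈ φ.ffvIn, ∀ M₀, Relation.TransGen IsChild M₀ M → mval (j X) M₀ = mval (j' X) M₀) →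
    eval φ M i j = eval φ M i j' := by
  intro φ
  induction φ with
  | fvar X =>
    intro hg M i j j' hout hin
    rw [eval, eval]
    have := hout X (by simp [Fm.ffvOut])
    simp only [mval] at this
    rw [this]
  | top => intro _ M i j j' _ _; rw [eval, eval]
  | prop p => intro _ M i j j' _ _; rw [eval, eval]
  | qmv φ x ih =>
    intro hg M i j j' hout hin
    rw [eval, eval]
    have key : ∀ a : M.Idx, eval φ (M.child a) (fun _ => none) j
        = eval φ (M.child a) (fun _ => none) j' := by
      intro a
      refine ih hg.2 _ _ _ _ (fun X hX => ?_) (fun X hX M₀ hM₀ => ?_)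
      · exact hin X (by simp [Fm.ffvIn, hX]) _ (Relation.TransGen.single ⟨a, rfl⟩)
      · exact hin X (by simp [Fm.ffvIn, hX]) _ (hM₀.tail ⟨a, rfl⟩)
    simp only [key]
  | qmc φ c ih =>
    intro hg M i j j' hout hin
    rw [eval, eval]
    have key : ∀ a : M.Idx, eval φ (M.child a) (fun _ => none) j
        = eval φ (M.child a) (fun _ => none) j' := by
      intro a
      refine ih hg.2 _ _ _ _ (fun X hX => ?_) (fun X hX M₀ hM₀ => ?_)
      · exact hin X (by simp [Fm.ffvIn, hX]) _ (Relation.TransGen.single ⟨a, rfl⟩)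
      · exact hin X (by simp [Fm.ffvIn, hX]) _ (hM₀.tail ⟨a, rfl⟩)
    simp only [key]
  | neg φ ih =>
    intro hg M i j j' hout hin
    rw [eval, eval, ih hg M i j j' hout hin]
  | and φ ψ ihφ ihψ =>
    intro hg M i j j' hout hin
    rw [eval, eval,
      ihφ hg.1 M i j j' (fun X hX => hout X (by simp [Fm.ffvOut, hX]))
        (fun X hX => hin X (by simp [Fm.ffvIn, hX])),
      ihψ hg.2 M i j j' (fun X hX => hout X (by simp [Fm.ffvOut, hX]))
        (fun X hX => hin X (by simp [Fm.ffvIn, hX]))]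
  | box φ ih =>
    intro hg M i j j' hout hin
    rw [eval, eval, ih hg M i j j' hout hin]
  | all x φ ih =>
    intro hg M i j j' hout hin
    rw [eval, eval]
    have key : ∀ a : M.Idx, eval φ M (Function.update i x (some a)) j
        = eval φ M (Function.update i x (some a)) j' := fun a =>
      ih hg M _ j j' hout hin
    simp only [key]
  | xi X ψ ih =>
    intro hg M i j j' hout hin
    obtain ⟨hfm, hffv, hgψ⟩ := hg
    obtain ⟨hO, hI⟩ := of_ffv_xi hffv
    -- the closure does not depend on j
    have hcl : ∀ N₀ : GKM W P C, xiClosure ψ X j N₀ = xiClosure ψ X j' N₀ := by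
      refine gkm_ind (fun N₀ ihN => ?_)
      rw [xiClosure_unfold, xiClosure_unfold]
      refine ih hgψ _ _ _ _ (fun Y hY => by simp [hO] at hY)
        (fun Y hY M₀ hM₀ => ?_)
      have hYX := hI Y hY; subst hYX
      simp only [mval, Function.update_self, Option.elim, dif_pos hM₀, ihN M₀ hM₀]
    rw [eval, eval]
    have hclf : (fun N => xiClosure ψ X j N) = fun N => xiClosure ψ X j' N :=
      funext hcl
    rw [hclf]
    refine ih hgψ _ _ _ _ (fun Y hY => by simp [hO] at hY) (fun Y hY M₀ hM₀ => ?_)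
    have hYX := hI Y hY; subst hYX
    simp [mval, Function.update_self]

theorem xiClosure_unfold_good {ψ : Fm P C} {X : ℕ} (hg : ψ.Good)
    (hO : ψ.ffvOut = ∅) (hI : ∀ Y ∈ ψ.ffvIn, Y = X) (j) (M : GKM W P C) :
    xiClosure ψ X j M = eval ψ M (fun _ => none)
      (Function.update j X (some (xiClosure ψ X j))) := by
  rw [xiClosure_unfold]
  refine eval_ext ψ hg _ _ _ _ (fun Y hY => by simp [hO] at hY)
    (fun Y hY M₀ hM₀ => ?_)
  have hYX := hI Y hY; subst hYX
  simp only [mval, Function.update_self, Option.elim, dif_pos hM₀]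

end GKM
namespace GKM
variable {W P C : Type}

/-- `F` is bisimulation-invariant at `M`. -/
def GInvAt (F : GKM W P C → Set W) (M : GKM W P C) : Prop :=
  ∀ s (N : GKM W P C) t, Bisim M s N t → (s ∈ F M ↔ t ∈ F N)

/-- The model-variable environments `i`, `i'` are related by `f u v`. -/
def EnvRel (M N : GKM W P C) (f : W → W → M.Idx → N.Idx → Prop) (u v : W)
    (i : ℕ → Option M.Idx) (i' : ℕ → Option N.Idx) : Prop :=
  ∀ x, (i x = none ∧ i' x = none) ∨
    ∃ a b, i x = some a ∧ i' x = some b ∧ f u v a b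

theorem main : ∀ M : GKM W P C,
    (∀ φ : Fm P C, ∀ (N : GKM W P C) (Z) (f), IsBisim M N Z f → φ.Good →
      ∀ u v i i' j, Z u v → EnvRel M N f u v i i' →
      (∀ Y ∈ φ.ffvOut, ∀ F, j Y = some F → GInvAt F M) →
      (∀ Y ∈ φ.ffvIn, ∀ F, j Y = some F →
        ∀ M₀, Relation.TransGen IsChild M₀ M → GInvAt F M₀) →
      (u ∈ eval φ M i j ↔ v ∈ eval φ N i' j)) ∧
    (∀ (ψ : Fm P C) (X : ℕ) (j), (Fm.xi X ψ).IsSentence →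
      GInvAt (xiClosure ψ X j) M) := by
  refine gkm_ind (fun M IH => ?_)
  have L : ∀ φ : Fm P C, ∀ (N : GKM W P C) (Z) (f), IsBisim M N Z f → φ.Good →
      ∀ u v i i' j, Z u v → EnvRel M N f u v i i' →
      (∀ Y ∈ φ.ffvOut, ∀ F, j Y = some F → GInvAt F M) →
      (∀ Y ∈ φ.ffvIn, ∀ F, j Y = some F →
        ∀ M₀, Relation.TransGen IsChild M₀ M → GInvAt F M₀) →
      (u ∈ eval φ M i j ↔ v ∈ eval φ N i' j) := by
    intro φ
    induction φ with
    | fvar X =>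
      intro N Z f hB hg u v i i' j hZ hE hout hin
      obtain ⟨hS, hV, htot, hsurj, hch, hconst, hzig, hzag⟩ := hB
      obtain ⟨huS, hvS⟩ := hS u v hZ
      have hbis : Bisim M u N v := (bisim_iff M N u v).mpr
        ⟨Z, f, hZ, hS, hV, htot, hsurj, hch, hconst, hzig, hzag⟩
      rw [eval, eval]
      cases hjX : j X with
      | none => simp [Option.elim]
      | some F =>
        have hinv := hout X (by simp [Fm.ffvOut]) F hjX u N v hbis
        simp only [Option.elim, Set.mem_inter_iff]
        exact and_congr (iff_of_true huS hvS) hinv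
    | top =>
      intro N Z f hB hg u v i i' j hZ hE hout hin
      obtain ⟨huS, hvS⟩ := hB.1 u v hZ
      rw [eval, eval]
      exact iff_of_true huS hvS
    | prop p =>
      intro N Z f hB hg u v i i' j hZ hE hout hin
      obtain ⟨huS, hvS⟩ := hB.1 u v hZ
      rw [eval, eval]
      simp only [Set.mem_inter_iff]
      exact and_congr (iff_of_true huS hvS) (hB.2.1 u v hZ p)
    | qmv φ x ih =>
      intro N Z f hB hg u v i i' j hZ hE hout hin
      obtain ⟨huS, hvS⟩ := hB.1 u v hZ
      rw [eval, eval]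
      simp only [Set.mem_setOf_eq]
      refine and_congr (iff_of_true huS hvS) ?_
      rcases hE x with ⟨h1, h2⟩ | ⟨a, b, h1, h2, hf⟩
      · simp [h1, h2]
      · have hbisab := hB.2.2.2.2.1 u v hZ a b hf
        obtain ⟨Z', f', hZ', hB'⟩ := (bisim_iff _ _ _ _).mp hbisab
        have hiff := (IH (M.child a) (Relation.TransGen.single ⟨a, rfl⟩)).1 φ
          (N.child b) Z' f' hB' hg.2 (M.T u a) (N.T v b)
          (fun _ => none) (fun _ => none) j hZ' (fun _ => Or.inl ⟨rfl, rfl⟩)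
          (fun Y hY F hF => hin Y (by simp [Fm.ffvIn, hY]) F hF _
            (Relation.TransGen.single ⟨a, rfl⟩))
          (fun Y hY F hF M₀ hM₀ => hin Y (by simp [Fm.ffvIn, hY]) F hF M₀
            (hM₀.tail ⟨a, rfl⟩))
        constructor
        · rintro ⟨a', ha', hmem⟩
          rw [h1] at ha'
          cases ha'
          exact ⟨b, h2, hiff.mp hmem⟩
        · rintro ⟨b', hb', hmem⟩
          rw [h2] at hb'
          cases hb'
          exact ⟨a, h1, hiff.mpr hmem⟩
    | qmc φ c ih =>
      intro N Z f hB hg u v i i' j hZ hE hout hin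
      obtain ⟨huS, hvS⟩ := hB.1 u v hZ
      rw [eval, eval]
      simp only [Set.mem_setOf_eq]
      refine and_congr (iff_of_true huS hvS) ?_
      rcases hB.2.2.2.2.2.1 u v hZ c with ⟨h1, h2⟩ | ⟨a, b, h1, h2, hbisab⟩
      · simp [h1, h2]
      · obtain ⟨Z', f', hZ', hB'⟩ := (bisim_iff _ _ _ _).mp hbisab
        have hiff := (IH (M.child a) (Relation.TransGen.single ⟨a, rfl⟩)).1 φ
          (N.child b) Z' f' hB' hg.2 (M.T u a) (N.T v b)
          (fun _ => none) (fun _ => none) j hZ' (fun _ => Or.inl ⟨rfl, rfl⟩)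
          (fun Y hY F hF => hin Y (by simp [Fm.ffvIn, hY]) F hF _
            (Relation.TransGen.single ⟨a, rfl⟩))
          (fun Y hY F hF M₀ hM₀ => hin Y (by simp [Fm.ffvIn, hY]) F hF M₀
            (hM₀.tail ⟨a, rfl⟩))
        constructor
        · rintro ⟨a', ha', hmem⟩
          rw [h1] at ha'
          cases ha'
          exact ⟨b, h2, hiff.mp hmem⟩
        · rintro ⟨b', hb', hmem⟩
          rw [h2] at hb'
          cases hb'
          exact ⟨a, h1, hiff.mpr hmem⟩
    | neg φ ih =>
      intro N Z f hB hg u v i i' j hZ hE hout hin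
      obtain ⟨huS, hvS⟩ := hB.1 u v hZ
      rw [eval, eval]
      simp only [Set.mem_diff]
      exact and_congr (iff_of_true huS hvS)
        (not_congr (ih N Z f hB hg u v i i' j hZ hE hout hin))
    | and φ ψ ihφ ihψ =>
      intro N Z f hB hg u v i i' j hZ hE hout hin
      rw [eval, eval]
      simp only [Set.mem_inter_iff]
      exact and_congr
        (ihφ N Z f hB hg.1 u v i i' j hZ hE
          (fun Y hY => hout Y (by simp [Fm.ffvOut, hY]))
          (fun Y hY => hin Y (by simp [Fm.ffvIn, hY])))
        (ihψ N Z f hB hg.2 u v i i' j hZ hE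
          (fun Y hY => hout Y (by simp [Fm.ffvOut, hY]))
          (fun Y hY => hin Y (by simp [Fm.ffvIn, hY])))
    | box φ ih =>
      intro N Z f hB hg u v i i' j hZ hE hout hin
      obtain ⟨huS, hvS⟩ := hB.1 u v hZ
      rw [eval, eval]
      simp only [Set.mem_setOf_eq]
      refine and_congr (iff_of_true huS hvS) ⟨fun h v' hRv => ?_, fun h u' hRu => ?_⟩
      · obtain ⟨u', hRu, hZ', hmono⟩ := hB.2.2.2.2.2.2.2 u v hZ v' hRv
        exact (ih N Z f hB hg u' v' i i' j hZ'
          (fun x => (hE x).imp id fun ⟨a, b, h1, h2, h3⟩ =>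
            ⟨a, b, h1, h2, hmono a b h3⟩) hout hin).mp (h u' hRu)
      · obtain ⟨v', hRv, hZ', hmono⟩ := hB.2.2.2.2.2.2.1 u v hZ u' hRu
        exact (ih N Z f hB hg u' v' i i' j hZ'
          (fun x => (hE x).imp id fun ⟨a, b, h1, h2, h3⟩ =>
            ⟨a, b, h1, h2, hmono a b h3⟩) hout hin).mpr (h v' hRv)
    | all x φ ih =>
      intro N Z f hB hg u v i i' j hZ hE hout hin
      obtain ⟨huS, hvS⟩ := hB.1 u v hZ
      rw [eval, eval]
      simp only [Set.mem_setOf_eq]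
      refine and_congr (iff_of_true huS hvS) ⟨fun h b => ?_, fun h a => ?_⟩
      · obtain ⟨a, hf⟩ := hB.2.2.2.1 u v hZ b
        refine (ih N Z f hB hg u v (Function.update i x (some a))
          (Function.update i' x (some b)) j hZ (fun y => ?_) hout hin).mp (h a)
        rcases eq_or_ne y x with rfl | hne
        · exact Or.inr ⟨a, b, Function.update_self _ _ _, Function.update_self _ _ _, hf⟩
        · simpa [Function.update_of_ne hne] using hE y
      · obtain ⟨b, hf⟩ := hB.2.2.1 u v hZ a
        refine (ih N Z f hB hg u v (Function.update i x (some a))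
          (Function.update i' x (some b)) j hZ (fun y => ?_) hout hin).mpr (h b)
        rcases eq_or_ne y x with rfl | hne
        · exact Or.inr ⟨a, b, Function.update_self _ _ _, Function.update_self _ _ _, hf⟩
        · simpa [Function.update_of_ne hne] using hE y
    | xi X ψ ih =>
      intro N Z f hB hg u v i i' j hZ hE hout hin
      obtain ⟨hfm, hffv, hgψ⟩ := hg
      obtain ⟨hO, hI⟩ := of_ffv_xi hffv
      have hsent : (Fm.xi X ψ).IsSentence := ⟨hfm, hffv, hfm, hffv, hgψ⟩
      rw [eval, eval]
      refine ih N Z f hB hgψ u v i i' _ hZ hE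
        (fun Y hY => by simp [hO] at hY) (fun Y hY F hF M₀ hM₀ => ?_)
      rw [hI Y hY, Function.update_self] at hF
      cases hF
      exact (IH M₀ hM₀).2 ψ X j hsent
  refine ⟨L, fun ψ X j hsent s N t hbis => ?_⟩
  obtain ⟨hfm, hffv, hgood⟩ := hsent
  obtain ⟨hfm', hffv', hgψ⟩ := hgood
  obtain ⟨hO, hI⟩ := of_ffv_xi hffv'
  obtain ⟨Z, f, hZ, hB⟩ := (bisim_iff _ _ _ _).mp hbis
  rw [xiClosure_unfold_good hgψ hO hI j M, xiClosure_unfold_good hgψ hO hI j N]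
  refine L ψ N Z f hB hgψ s t (fun _ => none) (fun _ => none) _ hZ
    (fun _ => Or.inl ⟨rfl, rfl⟩)
    (fun Y hY => by simp [hO] at hY) (fun Y hY F hF M₀ hM₀ => ?_)
  rw [hI Y hY, Function.update_self] at hF
  cases hF
  exact (IH M₀ hM₀).2 ψ X j ⟨hfm, hffv, hfm', hffv', hgψ⟩

end GKM
/-- bisimulation implies logical equivalence: bisimilar pointed
models satisfy the same FOMC-sentences. -/
theorem stmt10 {W P C : Type} (M N : GKM W P C) (s t : W)
    (h : GKM.Bisim M s N t) (φ : Fm P C) (hφ : φ.IsSentence) :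
    (GKM.Sat M s φ ↔ GKM.Sat N t φ) := by
  obtain ⟨Z, f, hZ, hB⟩ := (GKM.bisim_iff M N s t).mp h
  exact (GKM.main M).1 φ N Z f hB hφ.2.2 s t (fun _ => none) (fun _ => none)
    (fun _ => none) hZ (fun _ => Or.inl ⟨rfl, rfl⟩)
    (fun Y hY F hF => by exact absurd hF (by simp))
    (fun Y hY F hF => by exact absurd hF (by simp))
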